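/- If λ ∈ ℝ is a real eigenvalue of a linear operator A on a complex Hilbert space, then the point ((2λ)/(λ²+1), (λ²-1)/(λ²+1)) belongs to DW_BCK^ℝ(A) and lies on the unit circle x² + z² = 1. Conversely, every point of DW_BCK^ℝ(A) on the unit circle arises this way from a real eigenvalue of A. -/

import Mathlib

variable {H : Type*} [NormedAddCommGroup H] [InnerProductSpace ℂ H]

/-- The conformal range (real Davis–Wielandt shell) in the BCK model. -/
noncomputable def DWR (A : H →ₗ[ℂ] H) : Set (ℝ × ℝ) :=
  {p : ℝ × ℝ | ∃ x : H, x ≠ 0 ∧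
      p = (2 * (inner ℂ x (A x) : ℂ).re / (‖A x‖ ^ 2 + ‖x‖ ^ 2),
           (‖A x‖ ^ 2 - ‖x‖ ^ 2) / (‖A x‖ ^ 2 + ‖x‖ ^ 2))}

/-!
The point of `DWR A` given by `x ≠ 0` lies on the unit circle iff
`(Re ⟪x, A x⟫)² = ‖x‖² ‖A x‖²`, i.e. iff the real part of the inner product attains the
Cauchy–Schwarz bound. This forces `A x = λ x` with `λ = Re ⟪x, A x⟫ / ‖x‖²`, because
`‖A x - λ x‖² = ‖A x‖² - (Re ⟪x, A x⟫)² / ‖x‖²`. Conversely an eigenvector for a real `λ` gives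
`‖A x‖² = λ² ‖x‖²` and `Re ⟪x, A x⟫ = λ ‖x‖²`, and the point is then the image of `λ` under the
inverse stereographic projection.
-/

open RCLike in
theorem eq_smul_of_re_inner_sq_eq_mul {𝕜 E : Type*} [RCLike 𝕜] [NormedAddCommGroup E]
    [InnerProductSpace 𝕜 E] {x y : E} (hx : x ≠ 0)
    (h : re (inner 𝕜 x y) ^ 2 = ‖x‖ ^ 2 * ‖y‖ ^ 2) :
    y = ((re (inner 𝕜 x y) / ‖x‖ ^ 2 : ℝ) : 𝕜) • x := by
  have hx0 : ‖x‖ ≠ 0 := norm_ne_zero_iff.mpr hx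
  set c : ℝ := re (inner 𝕜 x y) / ‖x‖ ^ 2
  have hdist : ‖y - (c : 𝕜) • x‖ ^ 2 = 0 := by
    rw [@norm_sub_sq 𝕜, inner_smul_real_right, norm_smul, RCLike.smul_re, inner_re_symm y x,
      RCLike.norm_ofReal, mul_pow, sq_abs]
    simp only [c]
    field_simp
    linear_combination -h
  rw [← sub_eq_zero, ← norm_eq_zero]
  exact pow_eq_zero_iff two_ne_zero |>.mp hdist

theorem bck_sq_add_sq (lam : ℝ) :
    (2 * lam / (lam ^ 2 + 1)) ^ 2 + ((lam ^ 2 - 1) / (lam ^ 2 + 1)) ^ 2 = 1 := by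
  field_simp
  ring

theorem sq_eq_mul_of_sq_add_sq_eq_one {a b s : ℝ} (hab : a ^ 2 + b ^ 2 ≠ 0)
    (h : (2 * s / (a ^ 2 + b ^ 2)) ^ 2 + ((a ^ 2 - b ^ 2) / (a ^ 2 + b ^ 2)) ^ 2 = 1) :
    s ^ 2 = b ^ 2 * a ^ 2 := by
  field_simp at h
  linear_combination h / 4

theorem pair_eq_bck_of_sq_eq_of_eq_mul {a b s lam : ℝ} (hb : b ≠ 0)
    (ha : a ^ 2 = lam ^ 2 * b ^ 2) (hs : s = lam * b ^ 2) :
    (2 * s / (a ^ 2 + b ^ 2), (a ^ 2 - b ^ 2) / (a ^ 2 + b ^ 2)) =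
      (2 * lam / (lam ^ 2 + 1), (lam ^ 2 - 1) / (lam ^ 2 + 1)) := by
  rw [ha, hs]
  have : lam ^ 2 + 1 ≠ 0 := by positivity
  ext <;> field_simp

theorem DWR_point_eq_bck_of_eigenvector (A : H →ₗ[ℂ] H) {x : H} {lam : ℝ} (hx : x ≠ 0)
    (hAx : A x = (lam : ℂ) • x) :
    (2 * (inner ℂ x (A x) : ℂ).re / (‖A x‖ ^ 2 + ‖x‖ ^ 2),
        (‖A x‖ ^ 2 - ‖x‖ ^ 2) / (‖A x‖ ^ 2 + ‖x‖ ^ 2)) =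
      (2 * lam / (lam ^ 2 + 1), (lam ^ 2 - 1) / (lam ^ 2 + 1)) := by
  refine pair_eq_bck_of_sq_eq_of_eq_mul (norm_ne_zero_iff.mpr hx) ?_ ?_
  · rw [hAx, norm_smul, mul_pow, Complex.norm_real, Real.norm_eq_abs, sq_abs]
  · rw [hAx, inner_smul_right, inner_self_eq_norm_sq_to_K, Complex.re_ofReal_mul]
    norm_cast

/-- The asymptotic (unit-circle) points of the conformal range are exactly the
BCK images of the real eigenvalues of `A`. -/
theorem DWR_asymptotic_points (A : H →ₗ[ℂ] H) :
    (∀ lam : ℝ, (∃ x : H, x ≠ 0 ∧ A x = (lam : ℂ) • x) →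
      ((2 * lam / (lam ^ 2 + 1), (lam ^ 2 - 1) / (lam ^ 2 + 1)) ∈ DWR A ∧
        (2 * lam / (lam ^ 2 + 1)) ^ 2 + ((lam ^ 2 - 1) / (lam ^ 2 + 1)) ^ 2 = 1)) ∧
    (∀ p ∈ DWR A, p.1 ^ 2 + p.2 ^ 2 = 1 →
      ∃ lam : ℝ, (∃ x : H, x ≠ 0 ∧ A x = (lam : ℂ) • x) ∧
        p = (2 * lam / (lam ^ 2 + 1), (lam ^ 2 - 1) / (lam ^ 2 + 1))) := by
  refine ⟨fun lam ⟨x, hx, hAx⟩ ↦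
    ⟨⟨x, hx, (DWR_point_eq_bck_of_eigenvector A hx hAx).symm⟩, bck_sq_add_sq lam⟩, ?_⟩
  rintro p ⟨x, hx, rfl⟩ hcirc
  have hsum : ‖A x‖ ^ 2 + ‖x‖ ^ 2 ≠ 0 := by positivity
  have hAx :=
    eq_smul_of_re_inner_sq_eq_mul (𝕜 := ℂ) hx (sq_eq_mul_of_sq_add_sq_eq_one hsum hcirc)
  exact ⟨_, ⟨x, hx, hAx⟩, DWR_point_eq_bck_of_eigenvector A hx hAx⟩
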